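/- arXiv:2212.00262 — 5 statements merged into one kernel-verified Lean document; each statement's English description precedes it below -/
import Mathlib

section
/- Let C ∈ ℝ^{r₁×r₂×r₃} with ‖C‖₁ ≤ η, let σ(t) = sin(ω₀t), and let f_{θx}, f_{θy}, f_{θz} be depth-d MLPs with activation σ and all weight matrices of ℓ₁-norm at most η, mapping ℝ → ℝ^{r₁}, ℝ^{r₂}, ℝ^{r₃} respectively. Define f(x,y,z) = C ×₁ f_{θx}(x) ×₂ f_{θy}(y) ×₃ f_{θz}(z). Then for all x₁, x₂, y₁, z₁ ∈ ℝ, |f(x₁,y₁,z₁) − f(x₂,y₁,z₁)| ≤ η^{3d+1} κ^{3d-3} ζ² |x₁ − x₂|, where κ = |ω₀| is the Lipschitz constant of σ and ζ = max{|y₁|,|z₁|}. -/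
/-- Hidden activations of an MLP applied to an input vector. -/
noncomputable def mlpAct (σ : ℝ → ℝ) (dims : ℕ → ℕ)
    (H : (k : ℕ) → Matrix (Fin (dims (k + 1))) (Fin (dims k)) ℝ) :
    (k : ℕ) → (Fin (dims 0) → ℝ) → (Fin (dims k) → ℝ)
  | 0, v => v
  | (k + 1), v => fun j => σ ((H k).mulVec (mlpAct σ dims H k v) j)

/-- Output of a depth-`d` MLP `H_d σ(H_{d-1} ⋯ σ(H₁ x))` on a scalar input. -/
noncomputable def mlpOut (σ : ℝ → ℝ) (dims : ℕ → ℕ)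
    (H : (k : ℕ) → Matrix (Fin (dims (k + 1))) (Fin (dims k)) ℝ)
    (d : ℕ) (x : ℝ) : Fin (dims ((d - 1) + 1)) → ℝ :=
  (H (d - 1)).mulVec (mlpAct σ dims H (d - 1) (fun _ => x))

lemma aux_mulVec_abs_le {m n : ℕ} (A : Matrix (Fin m) (Fin n) ℝ) (v : Fin n → ℝ)
    {η M : ℝ} (hA : ∑ i, ∑ j, |A i j| ≤ η) (hv : ∀ j, |v j| ≤ M) (hM : 0 ≤ M)
    (i : Fin m) : |A.mulVec v i| ≤ η * M := by
  have hrow : ∑ j, |A i j| ≤ η :=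
    le_trans (Finset.single_le_sum (f := fun i => ∑ j, |A i j|)
      (fun i _ => Finset.sum_nonneg fun j _ => abs_nonneg _) (Finset.mem_univ i)) hA
  have hmv : A.mulVec v i = ∑ j, A i j * v j := rfl
  rw [hmv]
  calc |∑ j, A i j * v j| ≤ ∑ j, |A i j * v j| := Finset.abs_sum_le_sum_abs _ _
    _ = ∑ j, |A i j| * |v j| := by simp [abs_mul]
    _ ≤ ∑ j, |A i j| * M := Finset.sum_le_sum fun j _ =>
        mul_le_mul_of_nonneg_left (hv j) (abs_nonneg _)
    _ = (∑ j, |A i j|) * M := by rw [Finset.sum_mul]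
    _ ≤ η * M := mul_le_mul_of_nonneg_right hrow hM

lemma aux_act_zero (ω₀ : ℝ) (dims : ℕ → ℕ)
    (H : (k : ℕ) → Matrix (Fin (dims (k + 1))) (Fin (dims k)) ℝ) :
    ∀ k, mlpAct (fun t => Real.sin (ω₀ * t)) dims H k (fun _ => (0:ℝ)) = fun _ => 0 := by
  intro k
  induction k with
  | zero => rfl
  | succ k ih =>
    funext j
    show Real.sin (ω₀ * (H k).mulVec (mlpAct (fun t => Real.sin (ω₀ * t)) dims H k (fun _ => 0)) j) = 0
    rw [ih]
    have : ((fun _ => (0:ℝ)) : Fin (dims k) → ℝ) = 0 := rfl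
    rw [this, Matrix.mulVec_zero]
    simp

lemma aux_sin_diff (a b : ℝ) : |Real.sin a - Real.sin b| ≤ |a - b| := by
  rw [Real.sin_sub_sin, abs_mul, abs_mul]
  calc |(2:ℝ)| * |Real.sin ((a - b) / 2)| * |Real.cos ((a + b) / 2)|
      ≤ |(2:ℝ)| * |(a - b) / 2| * 1 := by
        apply mul_le_mul
        · exact mul_le_mul_of_nonneg_left Real.abs_sin_le_abs (abs_nonneg _)
        · exact Real.abs_cos_le_one _
        · exact abs_nonneg _
        · positivity
    _ = |a - b| := by rw [mul_one, abs_div]; norm_num; ring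

lemma aux_sin_lip (ω₀ a b : ℝ) : |Real.sin (ω₀ * a) - Real.sin (ω₀ * b)| ≤ |ω₀| * |a - b| := by
  calc |Real.sin (ω₀ * a) - Real.sin (ω₀ * b)| ≤ |ω₀ * a - ω₀ * b| := aux_sin_diff _ _
    _ = |ω₀| * |a - b| := by rw [← mul_sub, abs_mul]

lemma aux_act_diff (ω₀ η : ℝ) (hη : 0 ≤ η) (dims : ℕ → ℕ)
    (H : (k : ℕ) → Matrix (Fin (dims (k + 1))) (Fin (dims k)) ℝ)
    (u v : Fin (dims 0) → ℝ) {M : ℝ} (hM : 0 ≤ M) (huv : ∀ j, |u j - v j| ≤ M) :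
    ∀ k, (∀ m < k, ∑ i, ∑ j, |H m i j| ≤ η) →
    ∀ i, |mlpAct (fun t => Real.sin (ω₀ * t)) dims H k u i -
          mlpAct (fun t => Real.sin (ω₀ * t)) dims H k v i| ≤ (η * |ω₀|) ^ k * M := by
  intro k
  induction k with
  | zero => intro _ i; simpa [mlpAct] using huv i
  | succ k ih =>
    intro hH i
    have ihk := ih (fun m hm => hH m (Nat.lt_succ_of_lt hm))
    set au := mlpAct (fun t => Real.sin (ω₀ * t)) dims H k u with hau
    set av := mlpAct (fun t => Real.sin (ω₀ * t)) dims H k v with hav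
    show |Real.sin (ω₀ * (H k).mulVec au i) - Real.sin (ω₀ * (H k).mulVec av i)| ≤ _
    have h1 := aux_sin_lip ω₀ ((H k).mulVec au i) ((H k).mulVec av i)
    have h2 : |(H k).mulVec au i - (H k).mulVec av i| ≤ η * ((η * |ω₀|) ^ k * M) := by
      have : (H k).mulVec au i - (H k).mulVec av i = (H k).mulVec (au - av) i := by
        rw [Matrix.mulVec_sub]; rfl
      rw [this]
      exact aux_mulVec_abs_le (H k) (au - av) (hH k (Nat.lt_succ_self k))
        (fun j => ihk j) (by positivity) i
    calc |Real.sin (ω₀ * (H k).mulVec au i) - Real.sin (ω₀ * (H k).mulVec av i)|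
        ≤ |ω₀| * |(H k).mulVec au i - (H k).mulVec av i| := h1
      _ ≤ |ω₀| * (η * ((η * |ω₀|) ^ k * M)) :=
          mul_le_mul_of_nonneg_left h2 (abs_nonneg _)
      _ = (η * |ω₀|) ^ (k + 1) * M := by ring


/-- Lipschitz bound on the MLP output. -/
lemma aux_out_diff (ω₀ η : ℝ) (hη : 0 ≤ η) (dims : ℕ → ℕ)
    (H : (k : ℕ) → Matrix (Fin (dims (k + 1))) (Fin (dims k)) ℝ)
    (d : ℕ) (hd : 1 ≤ d) (hH : ∀ k < d, ∑ i, ∑ j, |H k i j| ≤ η)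
    (x₁ x₂ : ℝ) {M : ℝ} (hM : 0 ≤ M) (hx : |x₁ - x₂| ≤ M) (a : Fin (dims ((d-1)+1))) :
    |mlpOut (fun t => Real.sin (ω₀ * t)) dims H d x₁ a -
     mlpOut (fun t => Real.sin (ω₀ * t)) dims H d x₂ a| ≤ η ^ d * |ω₀| ^ (d - 1) * M := by
  have hact := aux_act_diff ω₀ η hη dims H (fun _ => x₁) (fun _ => x₂) hM (fun _ => hx)
    (d - 1) (fun m hm => hH m (lt_of_lt_of_le hm (Nat.sub_le d 1)))
  unfold mlpOut
  have hsub : (H (d-1)).mulVec (mlpAct (fun t => Real.sin (ω₀ * t)) dims H (d-1) (fun _ => x₁)) a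
      - (H (d-1)).mulVec (mlpAct (fun t => Real.sin (ω₀ * t)) dims H (d-1) (fun _ => x₂)) a
      = (H (d-1)).mulVec (mlpAct (fun t => Real.sin (ω₀ * t)) dims H (d-1) (fun _ => x₁)
          - mlpAct (fun t => Real.sin (ω₀ * t)) dims H (d-1) (fun _ => x₂)) a := by
    rw [Matrix.mulVec_sub]; rfl
  rw [hsub]
  have := aux_mulVec_abs_le (H (d-1)) _
    (hH (d-1) (by omega))
    (fun j => hact j) (by positivity) a
  calc _ ≤ η * ((η * |ω₀|) ^ (d - 1) * M) := this
    _ = η ^ d * |ω₀| ^ (d - 1) * M := by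
        obtain ⟨e, rfl⟩ := Nat.exists_eq_add_of_le hd
        simp only [Nat.add_sub_cancel_left] at *
        rw [mul_pow]; ring

/-- Magnitude bound on the MLP output. -/
lemma aux_out_bound (ω₀ η : ℝ) (hη : 0 ≤ η) (dims : ℕ → ℕ)
    (H : (k : ℕ) → Matrix (Fin (dims (k + 1))) (Fin (dims k)) ℝ)
    (d : ℕ) (hd : 1 ≤ d) (hH : ∀ k < d, ∑ i, ∑ j, |H k i j| ≤ η)
    (x : ℝ) {M : ℝ} (hM : 0 ≤ M) (hx : |x| ≤ M) (a : Fin (dims ((d-1)+1))) :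
    |mlpOut (fun t => Real.sin (ω₀ * t)) dims H d x a| ≤ η ^ d * |ω₀| ^ (d - 1) * M := by
  have h0 : mlpOut (fun t => Real.sin (ω₀ * t)) dims H d 0 a = 0 := by
    unfold mlpOut
    rw [aux_act_zero]
    show (H (d-1)).mulVec 0 a = 0
    rw [Matrix.mulVec_zero]; rfl
  have := aux_out_diff ω₀ η hη dims H d hd hH x 0 hM (by simpa using hx) a
  rw [h0, sub_zero] at this
  exact this


/-- Lipschitz smoothness of the LRTFR in the first variable. -/
theorem lrtfr_lipschitz_first_variable (ω₀ η : ℝ) (d : ℕ) (hd : 1 ≤ d)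
    (dx dy dz : ℕ → ℕ) (hdx : dx 0 = 1) (hdy : dy 0 = 1) (hdz : dz 0 = 1)
    (Hx : (k : ℕ) → Matrix (Fin (dx (k + 1))) (Fin (dx k)) ℝ)
    (Hy : (k : ℕ) → Matrix (Fin (dy (k + 1))) (Fin (dy k)) ℝ)
    (Hz : (k : ℕ) → Matrix (Fin (dz (k + 1))) (Fin (dz k)) ℝ)
    (C : Fin (dx ((d - 1) + 1)) → Fin (dy ((d - 1) + 1)) → Fin (dz ((d - 1) + 1)) → ℝ)
    (hC : ∑ a, ∑ b, ∑ c, |C a b c| ≤ η)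
    (hHx : ∀ k < d, ∑ i, ∑ j, |Hx k i j| ≤ η)
    (hHy : ∀ k < d, ∑ i, ∑ j, |Hy k i j| ≤ η)
    (hHz : ∀ k < d, ∑ i, ∑ j, |Hz k i j| ≤ η)
    (x₁ x₂ y₁ z₁ : ℝ)
    (σ : ℝ → ℝ) (hσ : σ = fun t => Real.sin (ω₀ * t))
    (κ : ℝ) (hκ : κ = |ω₀|)
    (ζ : ℝ) (hζ : ζ = max |y₁| |z₁|)
    (f : ℝ → ℝ → ℝ → ℝ)
    (hf : ∀ x y z, f x y z = ∑ a, ∑ b, ∑ c,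
      C a b c * mlpOut σ dx Hx d x a * mlpOut σ dy Hy d y b * mlpOut σ dz Hz d z c) :
    |f x₁ y₁ z₁ - f x₂ y₁ z₁| ≤ η ^ (3 * d + 1) * κ ^ (3 * d - 3) * ζ ^ 2 * |x₁ - x₂| := by
  subst hσ hκ
  -- basic nonnegativity
  have hη : 0 ≤ η := le_trans (Finset.sum_nonneg fun a _ => Finset.sum_nonneg fun b _ =>
    Finset.sum_nonneg fun c _ => abs_nonneg _) hC
  have hζ0 : 0 ≤ ζ := hζ ▸ le_max_of_le_left (abs_nonneg _)
  have hy : |y₁| ≤ ζ := hζ ▸ le_max_left _ _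
  have hz : |z₁| ≤ ζ := hζ ▸ le_max_right _ _
  set Dx : ℝ := η ^ d * |ω₀| ^ (d - 1) * |x₁ - x₂| with hDx
  set My : ℝ := η ^ d * |ω₀| ^ (d - 1) * ζ with hMy
  have hDx0 : 0 ≤ Dx := by positivity
  have hMy0 : 0 ≤ My := by positivity
  have houtx : ∀ a, |mlpOut (fun t => Real.sin (ω₀ * t)) dx Hx d x₁ a -
      mlpOut (fun t => Real.sin (ω₀ * t)) dx Hx d x₂ a| ≤ Dx :=
    fun a => aux_out_diff ω₀ η hη dx Hx d hd hHx x₁ x₂ (abs_nonneg _) (le_refl _) a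
  have houty : ∀ b, |mlpOut (fun t => Real.sin (ω₀ * t)) dy Hy d y₁ b| ≤ My :=
    fun b => aux_out_bound ω₀ η hη dy Hy d hd hHy y₁ hζ0 hy b
  have houtz : ∀ c, |mlpOut (fun t => Real.sin (ω₀ * t)) dz Hz d z₁ c| ≤ My :=
    fun c => aux_out_bound ω₀ η hη dz Hz d hd hHz z₁ hζ0 hz c
  have key : |f x₁ y₁ z₁ - f x₂ y₁ z₁| ≤ η * (Dx * My * My) := by
    rw [hf, hf]
    rw [← Finset.sum_sub_distrib]
    calc |∑ a, ((∑ b, ∑ c, C a b c * mlpOut (fun t => Real.sin (ω₀ * t)) dx Hx d x₁ a *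
            mlpOut (fun t => Real.sin (ω₀ * t)) dy Hy d y₁ b * mlpOut (fun t => Real.sin (ω₀ * t)) dz Hz d z₁ c)
          - (∑ b, ∑ c, C a b c * mlpOut (fun t => Real.sin (ω₀ * t)) dx Hx d x₂ a *
            mlpOut (fun t => Real.sin (ω₀ * t)) dy Hy d y₁ b * mlpOut (fun t => Real.sin (ω₀ * t)) dz Hz d z₁ c))|
        ≤ ∑ a, ∑ b, ∑ c, |C a b c| * (Dx * My * My) := by
          refine (Finset.abs_sum_le_sum_abs _ _).trans (Finset.sum_le_sum fun a _ => ?_)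
          rw [← Finset.sum_sub_distrib]
          refine (Finset.abs_sum_le_sum_abs _ _).trans (Finset.sum_le_sum fun b _ => ?_)
          rw [← Finset.sum_sub_distrib]
          refine (Finset.abs_sum_le_sum_abs _ _).trans (Finset.sum_le_sum fun c _ => ?_)
          have : C a b c * mlpOut (fun t => Real.sin (ω₀ * t)) dx Hx d x₁ a *
                mlpOut (fun t => Real.sin (ω₀ * t)) dy Hy d y₁ b * mlpOut (fun t => Real.sin (ω₀ * t)) dz Hz d z₁ c
              - C a b c * mlpOut (fun t => Real.sin (ω₀ * t)) dx Hx d x₂ a *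
                mlpOut (fun t => Real.sin (ω₀ * t)) dy Hy d y₁ b * mlpOut (fun t => Real.sin (ω₀ * t)) dz Hz d z₁ c
              = C a b c * (mlpOut (fun t => Real.sin (ω₀ * t)) dx Hx d x₁ a -
                  mlpOut (fun t => Real.sin (ω₀ * t)) dx Hx d x₂ a) *
                mlpOut (fun t => Real.sin (ω₀ * t)) dy Hy d y₁ b *
                mlpOut (fun t => Real.sin (ω₀ * t)) dz Hz d z₁ c := by ring
          rw [this, abs_mul, abs_mul, abs_mul]
          have h1 : |C a b c| * |mlpOut (fun t => Real.sin (ω₀ * t)) dx Hx d x₁ a -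
              mlpOut (fun t => Real.sin (ω₀ * t)) dx Hx d x₂ a| *
              |mlpOut (fun t => Real.sin (ω₀ * t)) dy Hy d y₁ b| *
              |mlpOut (fun t => Real.sin (ω₀ * t)) dz Hz d z₁ c|
              ≤ |C a b c| * Dx * My * My := by
            exact mul_le_mul (mul_le_mul (mul_le_mul_of_nonneg_left (houtx a) (abs_nonneg _))
              (houty b) (abs_nonneg _) (mul_nonneg (abs_nonneg _) hDx0))
              (houtz c) (abs_nonneg _)
              (mul_nonneg (mul_nonneg (abs_nonneg _) hDx0) hMy0)
          calc _ ≤ |C a b c| * Dx * My * My := h1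
            _ = |C a b c| * (Dx * My * My) := by ring
      _ = (∑ a, ∑ b, ∑ c, |C a b c|) * (Dx * My * My) := by
          simp [Finset.sum_mul]
      _ ≤ η * (Dx * My * My) := by
          apply mul_le_mul_of_nonneg_right hC; positivity
  refine key.trans (le_of_eq ?_)
  rw [hDx, hMy]
  obtain ⟨e, rfl⟩ := Nat.exists_eq_add_of_le hd
  have h1 : 1 + e - 1 = e := by omega
  have h2 : 3 * (1 + e) + 1 = 3 * e + 4 := by omega
  have h3 : 3 * (1 + e) - 3 = 3 * e := by omega
  rw [h1, h2, h3]
  have he : η ^ (1 + e) = η * η ^ e := by rw [pow_add, pow_one]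
  rw [he]
  ring
end

section
/- Let f(x,y,z) = C ×₁ f_{θx}(x) ×₂ f_{θy}(y) ×₃ f_{θz}(z) where C and the three depth-d MLPs satisfy: activation σ Lipschitz with constant κ and σ(0)=0, ‖C‖₁ ≤ η, and all weight matrices of ℓ₁-norm at most η. Then for any coordinate vectors x ∈ ℝ^{n₁}, y ∈ ℝ^{n₂}, z ∈ ℝ^{n₃} and the sampled tensor T(i,j,k) = f(x(i),y(j),z(k)), one has |T(i,j,k) − T(i-1,j,k)| ≤ δ|x(i) − x(i-1)| for all valid i,j,k, where δ = η^{3d+1}κ^{3d-3}ζ̃² and ζ̃ = max{‖x‖_∞, ‖y‖_∞, ‖z‖_∞}. -/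
/-!
Each MLP is `η^d κ^(d-1)`-Lipschitz: every layer multiplies entrywise differences by at most
`η` (the ℓ₁-norm of the weights) and every activation by at most `κ`. Since `σ 0 = 0`, the MLP
maps `0` to `0`, so the same constant also bounds `|f_θ(t)|` by `η^d κ^(d-1) |t|`. The sampled
difference along mode 1 is the mode product of `C` with the difference of the `x`-factors and
the two other factors, hence at most `‖C‖₁ ≤ η` times the product of these three bounds.
-/

open Finset

/-- The mode product `C ×₁ u ×₂ v ×₃ w`. -/
def modeProduct {ι₁ ι₂ ι₃ : Type*} [Fintype ι₁] [Fintype ι₂] [Fintype ι₃]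
    (C : ι₁ → ι₂ → ι₃ → ℝ) (u : ι₁ → ℝ) (v : ι₂ → ℝ) (w : ι₃ → ℝ) : ℝ :=
  ∑ a, ∑ b, ∑ c, C a b c * u a * v b * w c

section ModeProduct

variable {ι₁ ι₂ ι₃ : Type*} [Fintype ι₁] [Fintype ι₂] [Fintype ι₃]
  (C : ι₁ → ι₂ → ι₃ → ℝ)

theorem modeProduct_sub_left (u u' : ι₁ → ℝ) (v : ι₂ → ℝ) (w : ι₃ → ℝ) :
    modeProduct C u v w - modeProduct C u' v w = modeProduct C (u - u') v w := by
  simp only [modeProduct, ← sum_sub_distrib, Pi.sub_apply]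
  exact sum_congr rfl fun _ _ => sum_congr rfl fun _ _ => sum_congr rfl fun _ _ => by ring

theorem abs_modeProduct_le {u : ι₁ → ℝ} {v : ι₂ → ℝ} {w : ι₃ → ℝ} {U V W : ℝ}
    (hu : ∀ a, |u a| ≤ U) (hv : ∀ b, |v b| ≤ V) (hw : ∀ c, |w c| ≤ W) :
    |modeProduct C u v w| ≤ (∑ a, ∑ b, ∑ c, |C a b c|) * (U * V * W) := by
  have hterm : ∀ a b c, |C a b c * u a * v b * w c| ≤ |C a b c| * (U * V * W) := by
    intro a b c
    have hU : 0 ≤ U := (abs_nonneg _).trans (hu a)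
    have hV : 0 ≤ V := (abs_nonneg _).trans (hv b)
    have huvw : |u a| * |v b| * |w c| ≤ U * V * W :=
      mul_le_mul (mul_le_mul (hu a) (hv b) (abs_nonneg _) hU) (hw c) (abs_nonneg _)
        (mul_nonneg hU hV)
    calc |C a b c * u a * v b * w c| = |C a b c| * (|u a| * |v b| * |w c|) := by
          simp only [abs_mul]; ring
      _ ≤ |C a b c| * (U * V * W) := mul_le_mul_of_nonneg_left huvw (abs_nonneg _)
  calc |modeProduct C u v w|
      ≤ ∑ a, ∑ b, ∑ c, |C a b c * u a * v b * w c| :=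
        (abs_sum_le_sum_abs _ _).trans <| sum_le_sum fun a _ =>
          (abs_sum_le_sum_abs _ _).trans <| sum_le_sum fun b _ => abs_sum_le_sum_abs _ _
    _ ≤ ∑ a, ∑ b, ∑ c, |C a b c| * (U * V * W) :=
        sum_le_sum fun a _ => sum_le_sum fun b _ => sum_le_sum fun c _ => hterm a b c
    _ = (∑ a, ∑ b, ∑ c, |C a b c|) * (U * V * W) := by simp only [sum_mul]

end ModeProduct

theorem abs_mulVec_le_of_sum_abs_le {m n : Type*} [Fintype m] [Fintype n]
    {M : Matrix m n ℝ} {v : n → ℝ} {η B : ℝ} (hM : ∑ i, ∑ j, |M i j| ≤ η)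
    (hv : ∀ j, |v j| ≤ B) (hB : 0 ≤ B) (i : m) : |M.mulVec v i| ≤ η * B := by
  have hrow : ∑ j, |M i j| ≤ η :=
    (single_le_sum (f := fun i => ∑ j, |M i j|)
      (fun _ _ => sum_nonneg fun _ _ => abs_nonneg _) (mem_univ i)).trans hM
  calc |M.mulVec v i| ≤ ∑ j, |M i j| * |v j| := by
        simpa only [Matrix.mulVec, dotProduct, abs_mul] using
          abs_sum_le_sum_abs (fun j => M i j * v j) univ
    _ ≤ ∑ j, |M i j| * B := sum_le_sum fun j _ => mul_le_mul_of_nonneg_left (hv j) (abs_nonneg _)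
    _ = (∑ j, |M i j|) * B := (sum_mul _ _ _).symm
    _ ≤ η * B := mul_le_mul_of_nonneg_right hrow hB

theorem nonneg_of_abs_sub_le_mul {σ : ℝ → ℝ} {κ : ℝ} (hσ : ∀ a b : ℝ, |σ a - σ b| ≤ κ * |a - b|) :
    0 ≤ κ :=
  (abs_nonneg (σ 1 - σ 0)).trans (by simpa using hσ 1 0 : |σ 1 - σ 0| ≤ κ)

section MLP

variable {σ : ℝ → ℝ} {κ η : ℝ} {dims : ℕ → ℕ}
  {H : (k : ℕ) → Matrix (Fin (dims (k + 1))) (Fin (dims k)) ℝ}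

theorem mlpAct_zero_input (hσ0 : σ 0 = 0) (k : ℕ) : mlpAct σ dims H k 0 = 0 := by
  induction k with
  | zero => rfl
  | succ k ih =>
    funext a
    simp only [mlpAct, ih, Matrix.mulVec_zero, Pi.zero_apply, hσ0]

theorem abs_mlpAct_sub_le (hσ : ∀ a b : ℝ, |σ a - σ b| ≤ κ * |a - b|) (hη : 0 ≤ η)
    {v w : Fin (dims 0) → ℝ} {B : ℝ} (hvw : ∀ i, |v i - w i| ≤ B) (hB : 0 ≤ B) (k : ℕ)
    (hH : ∀ m < k, ∑ i, ∑ j, |H m i j| ≤ η) (a : Fin (dims k)) :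
    |mlpAct σ dims H k v a - mlpAct σ dims H k w a| ≤ (κ * η) ^ k * B := by
  induction k with
  | zero => simpa [mlpAct] using hvw a
  | succ k ih =>
    have hκ := nonneg_of_abs_sub_le_mul hσ
    have hlayer : |(H k).mulVec (mlpAct σ dims H k v - mlpAct σ dims H k w) a|
        ≤ η * ((κ * η) ^ k * B) :=
      abs_mulVec_le_of_sum_abs_le (hH k k.lt_succ_self)
        (ih (fun m hm => hH m (hm.trans k.lt_succ_self)))
        (mul_nonneg (pow_nonneg (mul_nonneg hκ hη) _) hB) a
    rw [Matrix.mulVec_sub] at hlayer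
    calc |mlpAct σ dims H (k + 1) v a - mlpAct σ dims H (k + 1) w a|
        ≤ κ * |(H k).mulVec (mlpAct σ dims H k v) a - (H k).mulVec (mlpAct σ dims H k w) a| :=
          hσ _ _
      _ ≤ κ * (η * ((κ * η) ^ k * B)) := mul_le_mul_of_nonneg_left hlayer hκ
      _ = (κ * η) ^ (k + 1) * B := by ring

variable {d : ℕ}

theorem abs_mlpOut_sub_le (hσ : ∀ a b : ℝ, |σ a - σ b| ≤ κ * |a - b|) (hη : 0 ≤ η)
    (hd : 1 ≤ d) (hH : ∀ m < d, ∑ i, ∑ j, |H m i j| ≤ η) (s t : ℝ)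
    (a : Fin (dims ((d - 1) + 1))) :
    |mlpOut σ dims H d s a - mlpOut σ dims H d t a| ≤ η ^ d * κ ^ (d - 1) * |s - t| := by
  have hκ := nonneg_of_abs_sub_le_mul hσ
  have hact := abs_mlpAct_sub_le (H := H) hσ hη (v := fun _ => s) (w := fun _ => t)
    (fun _ => le_rfl) (abs_nonneg _) (d - 1) (fun m hm => hH m (by omega))
  have hout : |(H (d - 1)).mulVec
      (mlpAct σ dims H (d - 1) (fun _ => s) - mlpAct σ dims H (d - 1) (fun _ => t)) a|
      ≤ η * ((κ * η) ^ (d - 1) * |s - t|) :=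
    abs_mulVec_le_of_sum_abs_le (hH (d - 1) (by omega)) hact
    (mul_nonneg (pow_nonneg (mul_nonneg hκ hη) _) (abs_nonneg _)) a
  rw [Matrix.mulVec_sub] at hout
  obtain ⟨m, rfl⟩ : ∃ m, d = m + 1 := ⟨d - 1, by omega⟩
  calc |mlpOut σ dims H (m + 1) s a - mlpOut σ dims H (m + 1) t a|
      ≤ η * ((κ * η) ^ m * |s - t|) := hout
    _ = η ^ (m + 1) * κ ^ (m + 1 - 1) * |s - t| := by rw [Nat.add_sub_cancel]; ring

theorem abs_mlpOut_le (hσ : ∀ a b : ℝ, |σ a - σ b| ≤ κ * |a - b|) (hσ0 : σ 0 = 0)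
    (hη : 0 ≤ η) (hd : 1 ≤ d) (hH : ∀ m < d, ∑ i, ∑ j, |H m i j| ≤ η) (t : ℝ)
    (a : Fin (dims ((d - 1) + 1))) :
    |mlpOut σ dims H d t a| ≤ η ^ d * κ ^ (d - 1) * |t| := by
  have h0 : mlpOut σ dims H d 0 a = 0 := by
    simp only [mlpOut, show (fun _ => (0 : ℝ)) = 0 from rfl, mlpAct_zero_input hσ0,
      Matrix.mulVec_zero, Pi.zero_apply]
  simpa [h0] using abs_mlpOut_sub_le hσ hη hd hH t 0 a

end MLP

theorem abs_le_ciSup_abs {ι : Type*} [Finite ι] (x : ι → ℝ) (i : ι) : |x i| ≤ ⨆ i, |x i| :=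
  le_ciSup (f := fun i => |x i|) (Set.finite_range _).bddAbove i

theorem lrtfr_sampled_tensor_smoothness_general (σ : ℝ → ℝ) (κ η : ℝ) (d : ℕ) (hd : 1 ≤ d)
    (dx dy dz : ℕ → ℕ)
    (Hx : (k : ℕ) → Matrix (Fin (dx (k + 1))) (Fin (dx k)) ℝ)
    (Hy : (k : ℕ) → Matrix (Fin (dy (k + 1))) (Fin (dy k)) ℝ)
    (Hz : (k : ℕ) → Matrix (Fin (dz (k + 1))) (Fin (dz k)) ℝ)
    (C : Fin (dx ((d - 1) + 1)) → Fin (dy ((d - 1) + 1)) → Fin (dz ((d - 1) + 1)) → ℝ)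
    (hσ : ∀ a b : ℝ, |σ a - σ b| ≤ κ * |a - b|) (hσ0 : σ 0 = 0)
    (hC : ∑ a, ∑ b, ∑ c, |C a b c| ≤ η)
    (hHx : ∀ k < d, ∑ i, ∑ j, |Hx k i j| ≤ η)
    (hHy : ∀ k < d, ∑ i, ∑ j, |Hy k i j| ≤ η)
    (hHz : ∀ k < d, ∑ i, ∑ j, |Hz k i j| ≤ η)
    (f : ℝ → ℝ → ℝ → ℝ)
    (hf : ∀ x y z, f x y z = ∑ a, ∑ b, ∑ c,
      C a b c * mlpOut σ dx Hx d x a * mlpOut σ dy Hy d y b * mlpOut σ dz Hz d z c)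
    {n₁ n₂ n₃ : ℕ}
    (x : Fin (n₁ + 1) → ℝ) (y : Fin (n₂ + 1) → ℝ) (z : Fin (n₃ + 1) → ℝ)
    (T : Fin (n₁ + 1) → Fin (n₂ + 1) → Fin (n₃ + 1) → ℝ)
    (hT : ∀ i j k, T i j k = f (x i) (y j) (z k))
    (ζ : ℝ) (hζ : ζ = max (⨆ i, |x i|) (max (⨆ j, |y j|) (⨆ k, |z k|)))
    (δ : ℝ) (hδ : δ = η ^ (3 * d + 1) * κ ^ (3 * d - 3) * ζ ^ 2) :
    ∀ (i : Fin n₁) (j : Fin (n₂ + 1)) (k : Fin (n₃ + 1)),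
      |T i.succ j k - T i.castSucc j k| ≤ δ * |x i.succ - x i.castSucc| := by
  intro i j k
  have hη : 0 ≤ η := (sum_nonneg fun _ _ => sum_nonneg fun _ _ => abs_nonneg _).trans (hHx 0 hd)
  set L := η ^ d * κ ^ (d - 1)
  have hL : 0 ≤ L := mul_nonneg (pow_nonneg hη _) (pow_nonneg (nonneg_of_abs_sub_le_mul hσ) _)
  have hy : |y j| ≤ ζ := hζ ▸ (abs_le_ciSup_abs y j).trans (le_max_of_le_right (le_max_left _ _))
  have hz : |z k| ≤ ζ := hζ ▸ (abs_le_ciSup_abs z k).trans (le_max_of_le_right (le_max_right _ _))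
  have hdiff : |T i.succ j k - T i.castSucc j k|
      ≤ (∑ a, ∑ b, ∑ c, |C a b c|) * (L * |x i.succ - x i.castSucc| * (L * ζ) * (L * ζ)) := by
    simp only [hT, hf, ← modeProduct.eq_def, modeProduct_sub_left]
    exact abs_modeProduct_le C
      (fun a => abs_mlpOut_sub_le hσ hη hd hHx _ _ a)
      (fun b => (abs_mlpOut_le hσ hσ0 hη hd hHy _ b).trans (mul_le_mul_of_nonneg_left hy hL))
      (fun c => (abs_mlpOut_le hσ hσ0 hη hd hHz _ c).trans (mul_le_mul_of_nonneg_left hz hL))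
  have hζ0 : 0 ≤ ζ := (abs_nonneg _).trans hy
  refine hdiff.trans ((mul_le_mul_of_nonneg_right hC (by positivity)).trans_eq ?_)
  obtain ⟨m, rfl⟩ : ∃ m, d = m + 1 := ⟨d - 1, by omega⟩
  rw [hδ, show 3 * (m + 1) - 3 = 3 * m by omega]
  simp only [L, Nat.add_sub_cancel]
  ring

/-- smoothness of any tensor sampled from the LRTFR along mode 1. -/
theorem lrtfr_sampled_tensor_smoothness (σ : ℝ → ℝ) (κ η : ℝ) (d : ℕ) (hd : 1 ≤ d)
    (dx dy dz : ℕ → ℕ) (hdx : dx 0 = 1) (hdy : dy 0 = 1) (hdz : dz 0 = 1)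
    (Hx : (k : ℕ) → Matrix (Fin (dx (k + 1))) (Fin (dx k)) ℝ)
    (Hy : (k : ℕ) → Matrix (Fin (dy (k + 1))) (Fin (dy k)) ℝ)
    (Hz : (k : ℕ) → Matrix (Fin (dz (k + 1))) (Fin (dz k)) ℝ)
    (C : Fin (dx ((d - 1) + 1)) → Fin (dy ((d - 1) + 1)) → Fin (dz ((d - 1) + 1)) → ℝ)
    (hσ : ∀ a b : ℝ, |σ a - σ b| ≤ κ * |a - b|) (hσ0 : σ 0 = 0)
    (hC : ∑ a, ∑ b, ∑ c, |C a b c| ≤ η)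
    (hHx : ∀ k < d, ∑ i, ∑ j, |Hx k i j| ≤ η)
    (hHy : ∀ k < d, ∑ i, ∑ j, |Hy k i j| ≤ η)
    (hHz : ∀ k < d, ∑ i, ∑ j, |Hz k i j| ≤ η)
    (f : ℝ → ℝ → ℝ → ℝ)
    (hf : ∀ x y z, f x y z = ∑ a, ∑ b, ∑ c,
      C a b c * mlpOut σ dx Hx d x a * mlpOut σ dy Hy d y b * mlpOut σ dz Hz d z c)
    {n₁ n₂ n₃ : ℕ}
    (x : Fin (n₁ + 1) → ℝ) (y : Fin (n₂ + 1) → ℝ) (z : Fin (n₃ + 1) → ℝ)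
    (T : Fin (n₁ + 1) → Fin (n₂ + 1) → Fin (n₃ + 1) → ℝ)
    (hT : ∀ i j k, T i j k = f (x i) (y j) (z k))
    (ζ : ℝ) (hζ : ζ = max (⨆ i, |x i|) (max (⨆ j, |y j|) (⨆ k, |z k|)))
    (δ : ℝ) (hδ : δ = η ^ (3 * d + 1) * κ ^ (3 * d - 3) * ζ ^ 2) :
    ∀ (i : Fin n₁) (j : Fin (n₂ + 1)) (k : Fin (n₃ + 1)),
      |T i.succ j k - T i.castSucc j k| ≤ δ * |x i.succ - x i.castSucc| :=
  lrtfr_sampled_tensor_smoothness_general σ κ η d hd dx dy dz Hx Hy Hz C hσ hσ0 hC hHx hHy hHz f hf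
    x y z T hT ζ hζ δ hδ
end

section
/- Let f : X_f × Y_f × Z_f → ℝ be a bounded function with X_f, Y_f, Z_f ⊂ ℝ, such that the supremum r₁ of rank(T^{(1)}) over all sampled tensors T ∈ S[f] is finite and attained by some tensor T sampled at coordinates x ∈ X_f^{n₁}, y ∈ Y_f^{n₂}, z ∈ Z_f^{n₃}. Then there exist indices (j₁,k₁),…,(j_{r₁},k_{r₁}) and a function c : Y_f × Z_f → ℝ^{r₁} such that for all (x₀,y₀,z₀) ∈ X_f × Y_f × Z_f: f(x₀,y₀,z₀) = Σ_{l=1}^{r₁} c(y₀,z₀)(l) · f(x₀, y(j_l), z(k_l)). -/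
/-!
Pick `r₁` linearly independent columns `(y (J l), z (K l))` of the attaining unfolding.
Adjoining the column `(y₀, z₀)` and an arbitrary set of rows does not push the rank above `r₁`,
so on those rows the new column is a combination of the chosen ones. On the rows `x` the chosen
columns are independent, so the coefficients are already determined there: adjoining one more
row `x₀` cannot change them, and evaluating at `x₀` gives the identity.
-/

open Module Submodule Set

section LinearAlgebra

variable {K V : Type*} [Field K] [AddCommGroup V] [Module K V]

theorem exists_linearIndependent_comp_of_finrank_span_eq {ι : Type*} [Finite ι] {v : ι → V}
    {r : ℕ} (hr : finrank K (span K (range v)) = r) :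
    ∃ s : Fin r → ι, LinearIndependent K (v ∘ s) := by
  obtain ⟨κ, a, ha, hspan, hli⟩ := exists_linearIndependent' K v
  have : Finite κ := .of_injective a ha
  have : Fintype κ := .ofFinite κ
  have hcard : Fintype.card κ = r := by rw [← hr, ← hspan, finrank_span_eq_card hli]
  let e : Fin r ≃ κ := (Fintype.equivFinOfCardEq hcard).symm
  exact ⟨a ∘ e, hli.comp e e.injective⟩

theorem mem_span_of_finrank_span_insert_le {ι : Type*} [Fintype ι] {w : ι → V} {u : V}
    (hw : LinearIndependent K w)
    (h : finrank K (span K (insert u (range w))) ≤ Fintype.card ι) :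
    u ∈ span K (range w) := by
  have : FiniteDimensional K (span K (insert u (range w))) :=
    .span_of_finite K ((finite_range w).insert u)
  have hspan : span K (range w) = span K (insert u (range w)) :=
    eq_of_le_of_finrank_le (span_mono (subset_insert _ _)) (by rwa [finrank_span_eq_card hw])
  exact hspan ▸ subset_span (mem_insert _ _)

end LinearAlgebra

theorem exists_forall_eq_sum_mul_of_finrank_span_insert_le {K α β ι : Type*} [Field K]
    [Fintype ι] (F : α → β → K) (w : ι → β) {m : ℕ} (x : Fin m → α)
    (hw : LinearIndependent K fun l i => F (x i) (w l))
    (hrank : ∀ {m' : ℕ} (x' : Fin m' → α) (b : β),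
      finrank K (span K (insert (fun i => F (x' i) b) (range fun l i => F (x' i) (w l))))
        ≤ Fintype.card ι)
    (b : β) : ∃ c : ι → K, ∀ a, F a b = ∑ l, c l * F a (w l) := by
  obtain ⟨c, hc⟩ := (mem_span_range_iff_exists_fun K).1
    (mem_span_of_finrank_span_insert_le hw (hrank x b))
  refine ⟨c, fun a => ?_⟩
  let x' : Fin (m + 1) → α := Fin.cons a x
  let restrict : (Fin (m + 1) → K) →ₗ[K] (Fin m → K) := LinearMap.funLeft K K Fin.succ
  have hw' : LinearIndependent K fun l i => F (x' i) (w l) := hw.of_comp restrict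
  obtain ⟨d, hd⟩ := (mem_span_range_iff_exists_fun K).1
    (mem_span_of_finrank_span_insert_le hw' (hrank x' b))
  have hdc : ∀ l, d l = c l := by
    refine Fintype.linearIndependent_iffₛ.1 hw d c ?_
    have hd_restricted := congrArg restrict hd
    simp only [map_sum, map_smul] at hd_restricted
    rw [hc]
    exact hd_restricted
  simpa [x', Finset.sum_apply, hdc] using (congrFun hd 0).symm

theorem mode1_separation_general (Xf Yf Zf : Set ℝ) (f : Xf → Yf → Zf → ℝ)
    (r₁ : ℕ) {n₁ n₂ n₃ : ℕ}
    (x : Fin n₁ → Xf) (y : Fin n₂ → Yf) (z : Fin n₃ → Zf)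
    (hattain : Matrix.rank
      (Matrix.of fun i (p : Fin n₂ × Fin n₃) => f (x i) (y p.1) (z p.2)) = r₁)
    (hsup : ∀ (m₁ m₂ m₃ : ℕ) (x' : Fin m₁ → Xf) (y' : Fin m₂ → Yf) (z' : Fin m₃ → Zf),
      Matrix.rank
        (Matrix.of fun i (p : Fin m₂ × Fin m₃) => f (x' i) (y' p.1) (z' p.2)) ≤ r₁) :
    ∃ (J : Fin r₁ → Fin n₂) (K : Fin r₁ → Fin n₃) (c : Yf → Zf → Fin r₁ → ℝ),
      ∀ (x₀ : Xf) (y₀ : Yf) (z₀ : Zf),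
        f x₀ y₀ z₀ = ∑ l, c y₀ z₀ l * f x₀ (y (J l)) (z (K l)) := by
  let F : Xf → Yf × Zf → ℝ := fun a p => f a p.1 p.2
  have hcols : finrank ℝ (span ℝ (range fun (p : Fin n₂ × Fin n₃) i => F (x i) (y p.1, z p.2)))
      = r₁ := by
    rw [← hattain, Matrix.rank_eq_finrank_span_cols]
    rfl
  obtain ⟨s, hs⟩ := exists_linearIndependent_comp_of_finrank_span_eq hcols
  let w : Fin r₁ → Yf × Zf := fun l => (y (s l).1, z (s l).2)
  have hrank : ∀ {m : ℕ} (x' : Fin m → Xf) (p : Yf × Zf),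
      finrank ℝ (span ℝ (insert (fun i => F (x' i) p) (range fun l i => F (x' i) (w l))))
        ≤ Fintype.card (Fin r₁) := by
    intro m x' p
    let y' : Fin (n₂ + 1) → Yf := Fin.cons p.1 y
    let z' : Fin (n₃ + 1) → Zf := Fin.cons p.2 z
    have hsub : insert (fun i => F (x' i) p) (range fun l i => F (x' i) (w l)) ⊆
        range (Matrix.of fun i (q : Fin (n₂ + 1) × Fin (n₃ + 1)) =>
          f (x' i) (y' q.1) (z' q.2)).transpose :=
      insert_subset_iff.2
        ⟨⟨(0, 0), rfl⟩, range_subset_iff.2 fun l => ⟨((s l).1.succ, (s l).2.succ), rfl⟩⟩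
    calc _ ≤ _ := Submodule.finrank_mono (span_mono hsub)
      _ ≤ r₁ := (Matrix.rank_eq_finrank_span_cols _).symm.trans_le (hsup _ _ _ x' y' z')
      _ = _ := (Fintype.card_fin r₁).symm
  choose c hc using exists_forall_eq_sum_mul_of_finrank_span_insert_le F w x hs hrank
  exact ⟨fun l => (s l).1, fun l => (s l).2, fun y₀ z₀ => c (y₀, z₀),
    fun x₀ y₀ z₀ => hc (y₀, z₀) x₀⟩

/-- mode-1 separation: every mode-1 fiber function of f lies in the
    span of r₁ fixed mode-1 basis functions, with coefficients depending on (y₀,z₀). -/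
theorem mode1_separation (Xf Yf Zf : Set ℝ) (f : Xf → Yf → Zf → ℝ)
    (hbound : ∃ M : ℝ, ∀ a b c, |f a b c| ≤ M)
    (r₁ : ℕ) {n₁ n₂ n₃ : ℕ}
    (x : Fin n₁ → Xf) (y : Fin n₂ → Yf) (z : Fin n₃ → Zf)
    (hattain : Matrix.rank
      (Matrix.of fun i (p : Fin n₂ × Fin n₃) => f (x i) (y p.1) (z p.2)) = r₁)
    (hsup : ∀ (m₁ m₂ m₃ : ℕ) (x' : Fin m₁ → Xf) (y' : Fin m₂ → Yf) (z' : Fin m₃ → Zf),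
      Matrix.rank
        (Matrix.of fun i (p : Fin m₂ × Fin m₃) => f (x' i) (y' p.1) (z' p.2)) ≤ r₁) :
    ∃ (J : Fin r₁ → Fin n₂) (K : Fin r₁ → Fin n₃) (c : Yf → Zf → Fin r₁ → ℝ),
      ∀ (x₀ : Xf) (y₀ : Yf) (z₀ : Zf),
        f x₀ y₀ z₀ = ∑ l, c y₀ z₀ l * f x₀ (y (J l)) (z (K l)) :=
  mode1_separation_general Xf Yf Zf f r₁ x y z hattain hsup
end

section
/- Let f : X_f × Y_f × Z_f → ℝ be a bounded function with F-rank[f] = (r₁,r₂,r₃), all finite, where each supremum defining the F-rank is attained. Then there exist a tensor C ∈ ℝ^{r₁×r₂×r₃} and bounded functions f_x : X_f → ℝ^{r₁}, f_y : Y_f → ℝ^{r₂}, f_z : Z_f → ℝ^{r₃} such that f(v₁,v₂,v₃) = C ×₁ f_x(v₁) ×₂ f_y(v₂) ×₃ f_z(v₃) for every (v₁,v₂,v₃) ∈ X_f × Y_f × Z_f. -/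
/-!
For each mode, every finite sample of the matricization of `f` has rank at most `rᵢ` and some
sample has rank exactly `rᵢ`, so it contains a nonsingular `rᵢ × rᵢ` minor `G`, with rows at
points `u` and columns at points `w`. Bordering `G` by one more row `v` and column `b` gives a
singular matrix, and the Schur complement then writes the row of `f` at `v` as the combination
`f(v, w) G⁻¹` of the rows at `u`; these coefficients are bounded because `f` is. Expanding along
all three modes gives the core tensor `C = f(u₁, u₂, u₃)`.
-/

open Matrix

namespace Matrix

variable {K : Type*} [Field K] {m n : Type*}

theorem exists_linearIndependent_cols_of_rank_eq [Fintype n] (A : Matrix m n K) {r : ℕ}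
    (h : A.rank = r) : ∃ q : Fin r → n, LinearIndependent K (A.submatrix id q).col := by
  obtain ⟨κ, a, ha, hspan, hli⟩ := exists_linearIndependent' K A.col
  have : Finite κ := Finite.of_injective a ha
  have : Fintype κ := Fintype.ofFinite κ
  have hcard : Fintype.card κ = r := by
    rw [← h, rank_eq_finrank_span_cols, ← hspan, finrank_span_eq_card hli]
  let e : κ ≃ Fin r := Fintype.equivFinOfCardEq hcard
  exact ⟨a ∘ e.symm, hli.comp e.symm e.symm.injective⟩

theorem rank_eq_of_linearIndependent_cols {r : ℕ} (A : Matrix m (Fin r) K)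
    (h : LinearIndependent K A.col) : A.rank = r := by
  rw [rank_eq_finrank_span_cols, finrank_span_eq_card h, Fintype.card_fin]

theorem exists_isUnit_det_submatrix_of_rank_eq [Fintype m] [Fintype n] (A : Matrix m n K)
    {r : ℕ} (h : A.rank = r) :
    ∃ (p : Fin r → m) (q : Fin r → n), IsUnit (A.submatrix p q).det := by
  obtain ⟨q, hq⟩ := A.exists_linearIndependent_cols_of_rank_eq h
  have hBt : (A.submatrix id q)ᵀ.rank = r := by
    rw [rank_transpose, rank_eq_of_linearIndependent_cols _ hq]
  obtain ⟨p, hp⟩ := (A.submatrix id q)ᵀ.exists_linearIndependent_cols_of_rank_eq hBt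
  exact ⟨p, q, (isUnit_iff_isUnit_det _).mp (linearIndependent_rows_iff_isUnit.mp hp)⟩

theorem det_eq_zero_of_rank_lt [Fintype n] [DecidableEq n] {A : Matrix n n K}
    (h : A.rank < Fintype.card n) : A.det = 0 := by
  by_contra hA
  exact h.ne (rank_of_isUnit A ((isUnit_iff_isUnit_det A).mpr (isUnit_iff_ne_zero.mpr hA)))

-- The bordered determinant is `det G * (F v b - F(v, w) G⁻¹ F(u, b))` (Schur complement).
theorem apply_eq_of_det_border_eq_zero {α β ι : Type*} [Fintype ι] [DecidableEq ι]
    (F : Matrix α β K) {u : ι → α} {w : ι → β} (hG : IsUnit (F.submatrix u w).det) {v : α} {b : β}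
    (hv : (F.submatrix (Sum.elim u fun _ : Unit => v) (Sum.elim w fun _ : Unit => b)).det = 0) :
    F v b = ((fun c => F v (w c)) ᵥ* (F.submatrix u w)⁻¹) ⬝ᵥ fun a => F (u a) b := by
  have := (F.submatrix u w).invertibleOfIsUnitDet hG
  have hblocks : F.submatrix (Sum.elim u fun _ : Unit => v) (Sum.elim w fun _ : Unit => b) =
      fromBlocks (F.submatrix u w) (of fun a _ => F (u a) b) (of fun _ c => F v (w c))
        (of fun _ _ => F v b) := by
    ext (i | i) (j | j) <;> rfl
  rw [hblocks, det_fromBlocks₁₁, det_unique (n := Unit), invOf_eq_nonsing_inv] at hv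
  have hschur := sub_eq_zero.mp ((mul_eq_zero.mp hv).resolve_left hG.ne_zero)
  simpa [mul_apply, vecMul, dotProduct, Finset.sum_mul] using hschur

end Matrix

theorem exists_abs_vecMul_le {X ι κ : Type*} [Fintype ι] [Fintype κ] (x : X → ι → ℝ)
    (N : Matrix ι κ ℝ) (hx : ∃ M, ∀ v c, |x v c| ≤ M) : ∃ M, ∀ v a, |(x v ᵥ* N) a| ≤ M := by
  obtain ⟨M, hM⟩ := hx
  refine ⟨∑ a, ∑ c, |M| * |N c a|, fun v a => ?_⟩
  calc |(x v ᵥ* N) a| ≤ ∑ c, |x v c * N c a| := Finset.abs_sum_le_sum_abs _ _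
    _ ≤ ∑ c, |M| * |N c a| := by
        gcongr with c
        rw [abs_mul]
        exact mul_le_mul_of_nonneg_right ((hM v c).trans (le_abs_self M)) (abs_nonneg _)
    _ ≤ ∑ a, ∑ c, |M| * |N c a| :=
        Finset.single_le_sum (f := fun a => ∑ c, |M| * |N c a|)
          (fun _ _ => by positivity) (Finset.mem_univ a)

theorem rank_submatrix_le_of_grid {K α β γ : Type*} [Field K] (F : α → β → γ → K) {r : ℕ}
    (h : ∀ (m₁ m₂ m₃ : ℕ) (x : Fin m₁ → α) (y : Fin m₂ → β) (z : Fin m₃ → γ),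
      rank (of fun i (p : Fin m₂ × Fin m₃) => F (x i) (y p.1) (z p.2)) ≤ r)
    {ι κ : Type*} [Fintype ι] [Fintype κ] (x : ι → α) (c : κ → β × γ) :
    ((of fun a (p : β × γ) => F a p.1 p.2).submatrix x c).rank ≤ r := by
  let e := Fintype.equivFin ι
  let e' := Fintype.equivFin κ
  have hdiag : (of fun a (p : β × γ) => F a p.1 p.2).submatrix x c =
      (of fun i (p : Fin _ × Fin _) => F (x (e.symm i)) (c (e'.symm p.1)).1 (c (e'.symm p.2)).2
        ).submatrix e fun j => (e' j, e' j) := by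
    ext i j
    simp
  rw [hdiag]
  exact (rank_submatrix_le _ _ _).trans
    (h _ _ _ (x ∘ e.symm) (fun k => (c (e'.symm k)).1) fun k => (c (e'.symm k)).2)

theorem exists_bounded_row_expansion {α β : Type*} (F : Matrix α β ℝ)
    (hF : ∃ M, ∀ a b, |F a b| ≤ M) {r : ℕ}
    (hle : ∀ (x : Fin r ⊕ Unit → α) (y : Fin r ⊕ Unit → β), (F.submatrix x y).rank ≤ r)
    {m n : Type*} [Fintype m] [Fintype n] (x : m → α) (y : n → β)
    (hxy : (F.submatrix x y).rank = r) :
    ∃ (u : Fin r → α) (g : α → Fin r → ℝ),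
      (∃ M, ∀ v a, |g v a| ≤ M) ∧ ∀ v b, F v b = ∑ a, g v a * F (u a) b := by
  obtain ⟨p, q, hG⟩ := (F.submatrix x y).exists_isUnit_det_submatrix_of_rank_eq hxy
  refine ⟨x ∘ p, fun v => (fun c => F v (y (q c))) ᵥ* (F.submatrix (x ∘ p) (y ∘ q))⁻¹,
    exists_abs_vecMul_le _ _ (hF.imp fun M hM v c => hM v _), fun v b =>
      F.apply_eq_of_det_border_eq_zero hG (det_eq_zero_of_rank_lt ?_)⟩
  simpa [Nat.lt_succ_iff] using hle _ _

theorem eq_sum_core_mul_of_mode_expansions {R α β γ ι₁ ι₂ ι₃ : Type*} [CommSemiring R]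
    [Fintype ι₁] [Fintype ι₂] [Fintype ι₃] (f : α → β → γ → R)
    {u₁ : ι₁ → α} {u₂ : ι₂ → β} {u₃ : ι₃ → γ} {g₁ : α → ι₁ → R} {g₂ : β → ι₂ → R}
    {g₃ : γ → ι₃ → R}
    (h₁ : ∀ a b c, f a b c = ∑ i, g₁ a i * f (u₁ i) b c)
    (h₂ : ∀ a b c, f a b c = ∑ j, g₂ b j * f a (u₂ j) c)
    (h₃ : ∀ a b c, f a b c = ∑ k, g₃ c k * f a b (u₃ k)) (a : α) (b : β) (c : γ) :
    f a b c = ∑ i, ∑ j, ∑ k, f (u₁ i) (u₂ j) (u₃ k) * g₁ a i * g₂ b j * g₃ c k := by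
  calc f a b c = ∑ i, g₁ a i * f (u₁ i) b c := h₁ a b c
    _ = ∑ i, g₁ a i * ∑ j, g₂ b j * ∑ k, g₃ c k * f (u₁ i) (u₂ j) (u₃ k) := by
        simp only [← h₂, ← h₃]
    _ = _ := by
        simp only [Finset.mul_sum]
        exact Finset.sum_congr rfl fun i _ => Finset.sum_congr rfl fun j _ =>
          Finset.sum_congr rfl fun k _ => by ring

/-- low-rank tensor function factorization: a bounded function whose
    F-rank (r₁,r₂,r₃) is finite and attained factorizes as C ×₁ f_x ×₂ f_y ×₃ f_z. -/
theorem lowrank_tensor_function_factorization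
    (Xf Yf Zf : Set ℝ) (f : Xf → Yf → Zf → ℝ)
    (hbound : ∃ M : ℝ, ∀ a b c, |f a b c| ≤ M)
    (r₁ r₂ r₃ : ℕ)
    (hsup1 : ∀ (m₁ m₂ m₃ : ℕ) (x : Fin m₁ → Xf) (y : Fin m₂ → Yf) (z : Fin m₃ → Zf),
      Matrix.rank (Matrix.of fun i (p : Fin m₂ × Fin m₃) => f (x i) (y p.1) (z p.2)) ≤ r₁)
    (hatt1 : ∃ (m₁ m₂ m₃ : ℕ) (x : Fin m₁ → Xf) (y : Fin m₂ → Yf) (z : Fin m₃ → Zf),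
      Matrix.rank (Matrix.of fun i (p : Fin m₂ × Fin m₃) => f (x i) (y p.1) (z p.2)) = r₁)
    (hsup2 : ∀ (m₁ m₂ m₃ : ℕ) (x : Fin m₁ → Xf) (y : Fin m₂ → Yf) (z : Fin m₃ → Zf),
      Matrix.rank (Matrix.of fun j (p : Fin m₁ × Fin m₃) => f (x p.1) (y j) (z p.2)) ≤ r₂)
    (hatt2 : ∃ (m₁ m₂ m₃ : ℕ) (x : Fin m₁ → Xf) (y : Fin m₂ → Yf) (z : Fin m₃ → Zf),
      Matrix.rank (Matrix.of fun j (p : Fin m₁ × Fin m₃) => f (x p.1) (y j) (z p.2)) = r₂)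
    (hsup3 : ∀ (m₁ m₂ m₃ : ℕ) (x : Fin m₁ → Xf) (y : Fin m₂ → Yf) (z : Fin m₃ → Zf),
      Matrix.rank (Matrix.of fun k (p : Fin m₁ × Fin m₂) => f (x p.1) (y p.2) (z k)) ≤ r₃)
    (hatt3 : ∃ (m₁ m₂ m₃ : ℕ) (x : Fin m₁ → Xf) (y : Fin m₂ → Yf) (z : Fin m₃ → Zf),
      Matrix.rank (Matrix.of fun k (p : Fin m₁ × Fin m₂) => f (x p.1) (y p.2) (z k)) = r₃) :
    ∃ (C : Fin r₁ → Fin r₂ → Fin r₃ → ℝ)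
      (fx : Xf → Fin r₁ → ℝ) (fy : Yf → Fin r₂ → ℝ) (fz : Zf → Fin r₃ → ℝ),
      (∃ M : ℝ, ∀ v a, |fx v a| ≤ M) ∧
      (∃ M : ℝ, ∀ v b, |fy v b| ≤ M) ∧
      (∃ M : ℝ, ∀ v c, |fz v c| ≤ M) ∧
      ∀ (v₁ : Xf) (v₂ : Yf) (v₃ : Zf),
        f v₁ v₂ v₃ = ∑ a, ∑ b, ∑ c, C a b c * fx v₁ a * fy v₂ b * fz v₃ c := by
  obtain ⟨_, _, _, x₁, y₁, z₁, hx₁⟩ := hatt1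
  obtain ⟨_, _, _, x₂, y₂, z₂, hx₂⟩ := hatt2
  obtain ⟨_, _, _, x₃, y₃, z₃, hx₃⟩ := hatt3
  obtain ⟨u₁, g₁, hg₁, h₁⟩ := exists_bounded_row_expansion (of fun a (p : Yf × Zf) => f a p.1 p.2)
    (hbound.imp fun M hM a p => hM a p.1 p.2) (rank_submatrix_le_of_grid f hsup1)
    x₁ (fun (p : _ × _) => (y₁ p.1, z₁ p.2)) hx₁
  obtain ⟨u₂, g₂, hg₂, h₂⟩ := exists_bounded_row_expansion (of fun b (p : Xf × Zf) => f p.1 b p.2)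
    (hbound.imp fun M hM b p => hM p.1 b p.2)
    (rank_submatrix_le_of_grid (fun b a c => f a b c) fun _ _ _ y x z => hsup2 _ _ _ x y z)
    y₂ (fun (p : _ × _) => (x₂ p.1, z₂ p.2)) hx₂
  obtain ⟨u₃, g₃, hg₃, h₃⟩ := exists_bounded_row_expansion (of fun c (p : Xf × Yf) => f p.1 p.2 c)
    (hbound.imp fun M hM c p => hM p.1 p.2 c)
    (rank_submatrix_le_of_grid (fun c a b => f a b c) fun _ _ _ z x y => hsup3 _ _ _ x y z)
    z₃ (fun (p : _ × _) => (x₃ p.1, y₃ p.2)) hx₃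
  exact ⟨fun i j k => f (u₁ i) (u₂ j) (u₃ k), g₁, g₂, g₃, hg₁, hg₂, hg₃,
    eq_sum_core_mul_of_mode_expansions f (fun a b c => h₁ a (b, c)) (fun a b c => h₂ b (a, c))
      fun a b c => h₃ c (a, b)⟩
end

section
/- Let f be a bounded tensor function and suppose X ∈ S[f] attains sup rank of mode-1 unfolding r₁, sampled at coordinates (x^X, y^X, z^X). Form concatenated coordinate vectors x, y, z containing the coordinates of three tensors attaining the suprema in each mode, and let T be the tensor sampled from f at (x,y,z). Then rank(T^{(i)}) = rᵢ for all i = 1,2,3, i.e., a single sampled tensor simultaneously attains the F-rank in all three modes. -/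
/-!
Sampling `f` at coordinate vectors that contain the coordinates of a witness `X` makes every
unfolding of `X` a submatrix of the corresponding unfolding of `T`, so ranks can only grow; on
the other hand `T` is itself a sampled tensor, so each unfolding rank is bounded by the supremum.
The three modes are the same statement for `f` with its arguments permuted.
-/

namespace Matrix

variable {R X Y Z : Type*} [CommSemiring R]

/-- The mode-1 unfolding `T^{(1)}` of the tensor `T` sampled from `f` at `(x, y, z)`. -/
def sampleUnfolding {ι κ μ : Type*} (f : X → Y → Z → R) (x : ι → X) (y : κ → Y) (z : μ → Z) :
    Matrix ι (κ × μ) R :=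
  of fun i p => f (x i) (y p.1) (z p.2)

lemma rank_sampleUnfolding_le_of_forall_fin (f : X → Y → Z → R) {r : ℕ}
    (hsup : ∀ (m₁ m₂ m₃ : ℕ) (x : Fin m₁ → X) (y : Fin m₂ → Y) (z : Fin m₃ → Z),
      (sampleUnfolding f x y z).rank ≤ r)
    {ι κ μ : Type*} [Fintype ι] [Fintype κ] [Fintype μ]
    (x : ι → X) (y : κ → Y) (z : μ → Z) :
    (sampleUnfolding f x y z).rank ≤ r := by
  let eι := Fintype.equivFin ι
  let eκ := Fintype.equivFin κ
  let eμ := Fintype.equivFin μ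
  calc (sampleUnfolding f x y z).rank
      = ((sampleUnfolding f (x ∘ eι.symm) (y ∘ eκ.symm) (z ∘ eμ.symm)).submatrix eι
          (eκ.prodCongr eμ)).rank := by
        congr 1
        ext i p
        simp [sampleUnfolding]
    _ = (sampleUnfolding f (x ∘ eι.symm) (y ∘ eκ.symm) (z ∘ eμ.symm)).rank := rank_submatrix ..
    _ ≤ r := hsup ..

lemma rank_sampleUnfolding_comp_le [StrongRankCondition R] (f : X → Y → Z → R)
    {ι κ μ ι₀ κ₀ μ₀ : Type*} [Fintype κ] [Fintype μ] [Fintype κ₀] [Fintype μ₀]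
    (x : ι → X) (y : κ → Y) (z : μ → Z) (u : ι₀ → ι) (v : κ₀ → κ) (w : μ₀ → μ) :
    (sampleUnfolding f (x ∘ u) (y ∘ v) (z ∘ w)).rank ≤ (sampleUnfolding f x y z).rank :=
  rank_submatrix_le (sampleUnfolding f x y z) u (Prod.map v w)

theorem rank_sampleUnfolding_eq_of_comp [StrongRankCondition R] (f : X → Y → Z → R) {r : ℕ}
    (hsup : ∀ (m₁ m₂ m₃ : ℕ) (x : Fin m₁ → X) (y : Fin m₂ → Y) (z : Fin m₃ → Z),
      (sampleUnfolding f x y z).rank ≤ r)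
    {ι κ μ ι₀ κ₀ μ₀ : Type*} [Fintype ι] [Fintype κ] [Fintype μ] [Fintype κ₀] [Fintype μ₀]
    (x : ι → X) (y : κ → Y) (z : μ → Z) (u : ι₀ → ι) (v : κ₀ → κ) (w : μ₀ → μ)
    (hatt : (sampleUnfolding f (x ∘ u) (y ∘ v) (z ∘ w)).rank = r) :
    (sampleUnfolding f x y z).rank = r :=
  le_antisymm (rank_sampleUnfolding_le_of_forall_fin f hsup x y z)
    (hatt ▸ rank_sampleUnfolding_comp_le f x y z u v w)

end Matrix

theorem single_tensor_attains_all_modes_general (Xf Yf Zf : Set ℝ) (f : Xf → Yf → Zf → ℝ)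
    (r₁ r₂ r₃ : ℕ)
    (hsup1 : ∀ (m₁ m₂ m₃ : ℕ) (x : Fin m₁ → Xf) (y : Fin m₂ → Yf) (z : Fin m₃ → Zf),
      Matrix.rank (Matrix.of fun i (p : Fin m₂ × Fin m₃) => f (x i) (y p.1) (z p.2)) ≤ r₁)
    (hsup2 : ∀ (m₁ m₂ m₃ : ℕ) (x : Fin m₁ → Xf) (y : Fin m₂ → Yf) (z : Fin m₃ → Zf),
      Matrix.rank (Matrix.of fun j (p : Fin m₁ × Fin m₃) => f (x p.1) (y j) (z p.2)) ≤ r₂)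
    (hsup3 : ∀ (m₁ m₂ m₃ : ℕ) (x : Fin m₁ → Xf) (y : Fin m₂ → Yf) (z : Fin m₃ → Zf),
      Matrix.rank (Matrix.of fun k (p : Fin m₁ × Fin m₂) => f (x p.1) (y p.2) (z k)) ≤ r₃)
    {a₁ a₂ a₃ b₁ b₂ b₃ c₁ c₂ c₃ : ℕ}
    (x1 : Fin a₁ → Xf) (y1 : Fin a₂ → Yf) (z1 : Fin a₃ → Zf)
    (x2 : Fin b₁ → Xf) (y2 : Fin b₂ → Yf) (z2 : Fin b₃ → Zf)
    (x3 : Fin c₁ → Xf) (y3 : Fin c₂ → Yf) (z3 : Fin c₃ → Zf)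
    (hatt1 : Matrix.rank
      (Matrix.of fun i (p : Fin a₂ × Fin a₃) => f (x1 i) (y1 p.1) (z1 p.2)) = r₁)
    (hatt2 : Matrix.rank
      (Matrix.of fun j (p : Fin b₁ × Fin b₃) => f (x2 p.1) (y2 j) (z2 p.2)) = r₂)
    (hatt3 : Matrix.rank
      (Matrix.of fun k (p : Fin c₁ × Fin c₂) => f (x3 p.1) (y3 p.2) (z3 k)) = r₃)
    (xcat : Fin a₁ ⊕ Fin b₁ ⊕ Fin c₁ → Xf)
    (ycat : Fin a₂ ⊕ Fin b₂ ⊕ Fin c₂ → Yf)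
    (zcat : Fin a₃ ⊕ Fin b₃ ⊕ Fin c₃ → Zf)
    (hxc : xcat = Sum.elim x1 (Sum.elim x2 x3))
    (hyc : ycat = Sum.elim y1 (Sum.elim y2 y3))
    (hzc : zcat = Sum.elim z1 (Sum.elim z2 z3))
    (T : (Fin a₁ ⊕ Fin b₁ ⊕ Fin c₁) → (Fin a₂ ⊕ Fin b₂ ⊕ Fin c₂) →
      (Fin a₃ ⊕ Fin b₃ ⊕ Fin c₃) → ℝ)
    (hT : ∀ i j k, T i j k = f (xcat i) (ycat j) (zcat k)) :
    Matrix.rank (Matrix.of fun i (p : (Fin a₂ ⊕ Fin b₂ ⊕ Fin c₂) ×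
        (Fin a₃ ⊕ Fin b₃ ⊕ Fin c₃)) => T i p.1 p.2) = r₁ ∧
    Matrix.rank (Matrix.of fun j (p : (Fin a₁ ⊕ Fin b₁ ⊕ Fin c₁) ×
        (Fin a₃ ⊕ Fin b₃ ⊕ Fin c₃)) => T p.1 j p.2) = r₂ ∧
    Matrix.rank (Matrix.of fun k (p : (Fin a₁ ⊕ Fin b₁ ⊕ Fin c₁) ×
        (Fin a₂ ⊕ Fin b₂ ⊕ Fin c₂)) => T p.1 p.2 k) = r₃ := by
  obtain rfl : T = fun i j k => f (xcat i) (ycat j) (zcat k) :=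
    funext fun i => funext fun j => funext (hT i j)
  subst hxc hyc hzc
  -- Sum.elim reduces on constructors, so each witness is definitionally a sub-sample of `T`.
  refine ⟨?_, ?_, ?_⟩
  · exact Matrix.rank_sampleUnfolding_eq_of_comp f hsup1 _ _ _ Sum.inl Sum.inl Sum.inl hatt1
  · exact Matrix.rank_sampleUnfolding_eq_of_comp (fun b a c => f a b c)
      (fun _ _ _ y x z => hsup2 _ _ _ x y z) _ _ _
      (Sum.inr ∘ Sum.inl) (Sum.inr ∘ Sum.inl) (Sum.inr ∘ Sum.inl) hatt2
  · exact Matrix.rank_sampleUnfolding_eq_of_comp (fun c a b => f a b c)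
      (fun _ _ _ z x y => hsup3 _ _ _ x y z) _ _ _
      (Sum.inr ∘ Sum.inr) (Sum.inr ∘ Sum.inr) (Sum.inr ∘ Sum.inr) hatt3

/-- concatenating the coordinates of tensors attaining the F-rank
    in each mode yields a single sampled tensor attaining the F-rank in all modes. -/
theorem single_tensor_attains_all_modes (Xf Yf Zf : Set ℝ) (f : Xf → Yf → Zf → ℝ)
    (hbound : ∃ M : ℝ, ∀ a b c, |f a b c| ≤ M)
    (r₁ r₂ r₃ : ℕ)
    (hsup1 : ∀ (m₁ m₂ m₃ : ℕ) (x : Fin m₁ → Xf) (y : Fin m₂ → Yf) (z : Fin m₃ → Zf),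
      Matrix.rank (Matrix.of fun i (p : Fin m₂ × Fin m₃) => f (x i) (y p.1) (z p.2)) ≤ r₁)
    (hsup2 : ∀ (m₁ m₂ m₃ : ℕ) (x : Fin m₁ → Xf) (y : Fin m₂ → Yf) (z : Fin m₃ → Zf),
      Matrix.rank (Matrix.of fun j (p : Fin m₁ × Fin m₃) => f (x p.1) (y j) (z p.2)) ≤ r₂)
    (hsup3 : ∀ (m₁ m₂ m₃ : ℕ) (x : Fin m₁ → Xf) (y : Fin m₂ → Yf) (z : Fin m₃ → Zf),
      Matrix.rank (Matrix.of fun k (p : Fin m₁ × Fin m₂) => f (x p.1) (y p.2) (z k)) ≤ r₃)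
    {a₁ a₂ a₃ b₁ b₂ b₃ c₁ c₂ c₃ : ℕ}
    (x1 : Fin a₁ → Xf) (y1 : Fin a₂ → Yf) (z1 : Fin a₃ → Zf)
    (x2 : Fin b₁ → Xf) (y2 : Fin b₂ → Yf) (z2 : Fin b₃ → Zf)
    (x3 : Fin c₁ → Xf) (y3 : Fin c₂ → Yf) (z3 : Fin c₃ → Zf)
    (hatt1 : Matrix.rank
      (Matrix.of fun i (p : Fin a₂ × Fin a₃) => f (x1 i) (y1 p.1) (z1 p.2)) = r₁)
    (hatt2 : Matrix.rank
      (Matrix.of fun j (p : Fin b₁ × Fin b₃) => f (x2 p.1) (y2 j) (z2 p.2)) = r₂)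
    (hatt3 : Matrix.rank
      (Matrix.of fun k (p : Fin c₁ × Fin c₂) => f (x3 p.1) (y3 p.2) (z3 k)) = r₃)
    (xcat : Fin a₁ ⊕ Fin b₁ ⊕ Fin c₁ → Xf)
    (ycat : Fin a₂ ⊕ Fin b₂ ⊕ Fin c₂ → Yf)
    (zcat : Fin a₃ ⊕ Fin b₃ ⊕ Fin c₃ → Zf)
    (hxc : xcat = Sum.elim x1 (Sum.elim x2 x3))
    (hyc : ycat = Sum.elim y1 (Sum.elim y2 y3))
    (hzc : zcat = Sum.elim z1 (Sum.elim z2 z3))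
    (T : (Fin a₁ ⊕ Fin b₁ ⊕ Fin c₁) → (Fin a₂ ⊕ Fin b₂ ⊕ Fin c₂) →
      (Fin a₃ ⊕ Fin b₃ ⊕ Fin c₃) → ℝ)
    (hT : ∀ i j k, T i j k = f (xcat i) (ycat j) (zcat k)) :
    Matrix.rank (Matrix.of fun i (p : (Fin a₂ ⊕ Fin b₂ ⊕ Fin c₂) ×
        (Fin a₃ ⊕ Fin b₃ ⊕ Fin c₃)) => T i p.1 p.2) = r₁ ∧
    Matrix.rank (Matrix.of fun j (p : (Fin a₁ ⊕ Fin b₁ ⊕ Fin c₁) ×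
        (Fin a₃ ⊕ Fin b₃ ⊕ Fin c₃)) => T p.1 j p.2) = r₂ ∧
    Matrix.rank (Matrix.of fun k (p : (Fin a₁ ⊕ Fin b₁ ⊕ Fin c₁) ×
        (Fin a₂ ⊕ Fin b₂ ⊕ Fin c₂)) => T p.1 p.2 k) = r₃ :=
  single_tensor_attains_all_modes_general Xf Yf Zf f r₁ r₂ r₃ hsup1 hsup2 hsup3 x1 y1 z1 x2 y2 z2 x3
    y3 z3 hatt1 hatt2 hatt3 xcat ycat zcat hxc hyc hzc T hT
end
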